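/- arXiv:1304.6357 — 2 statements merged into one kernel-verified Lean document; each statement's English description precedes it below -/
import Mathlib

section
/- Let d ≥ 3 and let n be an integer with 1 ≤ n ≤ d−1. There exists a constant c = c(d,n) < ∞ such that for all z₀, zₙ ∈ ℤ^d with z₀ ≠ zₙ, ∑_{z₁,…,z_{n−1} ∈ ℤ^d} ∏_{i=0}^{n−1} f(z_i − z_{i+1}) ≤ c · |z₀ − zₙ|^{−(d−n)}, where f(z) := min(1, |z|^{−(d−1)}) for z ≠ 0 and f(0) := 1, and |·| denotes the Euclidean norm. (For n = 1 the left-hand side is the single term f(z₀ − z₁) with z₁ = zₙ.) -/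
open scoped BigOperators ENNReal

/-- The natural embedding of `ℤ^d` into Euclidean space `ℝ^d`. -/
noncomputable def latticeEmbed {d : ℕ} (z : Fin d → ℤ) : EuclideanSpace ℝ (Fin d) :=
  WithLp.toLp 2 (fun i => (z i : ℝ))

/-- `f(z) = min(1, |z|^{-(d-1)})` for `z ≠ 0`, and `f(0) = 1`. -/
noncomputable def latticeKernel {d : ℕ} (z : Fin d → ℤ) : ℝ :=
  if z = 0 then 1 else min 1 (‖latticeEmbed z‖ ^ (-((d : ℝ) - 1)))

/-!
Write `⟨z⟩ = max 1 ‖z‖_∞`. Since `‖z‖_∞ ≤ |z| ≤ d ‖z‖_∞`, the kernel is at most `⟨z⟩^{-(d-1)}` and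
it suffices to bound the chain sums by `C ⟨z₀ - zₙ⟩^{-(d-n)}`. Removing the first step of a chain
reduces this, by induction on `n`, to the discrete convolution estimate
`∑_z ⟨z⟩^{-a} ⟨x - z⟩^{-b} ≤ C ⟨x⟩^{-(a+b-d)}` for `a, b < d < a + b`, applied with `a = d - 1`,
`b = d - n`. The convolution estimate follows from counting the `O(m^{d-1})` lattice points on the
sphere `‖z‖_∞ = m`, after splitting the sum according to whether `z` is nearer to `0` or to `x`.
-/

open Finset

theorem Nat.pow_sub_pow_le_of_le {a b : ℕ} (h : b ≤ a) (n : ℕ) :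
    a ^ n - b ^ n ≤ (a - b) * n * a ^ (n - 1) := by
  have key := abs_pow_sub_pow_le (α := ℤ) a b n
  have hab : (b : ℤ) ≤ a := by exact_mod_cast h
  have hpow : (b : ℤ) ^ n ≤ a ^ n := pow_le_pow_left₀ (by positivity) hab n
  rw [abs_of_nonneg (sub_nonneg.mpr hpow), abs_of_nonneg (sub_nonneg.mpr hab),
    max_eq_left (by simpa using hab), abs_of_nonneg (by positivity)] at key
  zify [h, Nat.pow_le_pow_left h n]
  exact key

namespace ENNReal

theorem pow_mul_inv_pow_of_le {u : ℝ≥0∞} (h0 : u ≠ 0) (ht : u ≠ ∞) {p q : ℕ} (h : q ≤ p) :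
    u ^ p * u⁻¹ ^ q = u ^ (p - q) := by
  conv_lhs => rw [← Nat.sub_add_cancel h, pow_add, mul_assoc, ← mul_pow,
    ENNReal.mul_inv_cancel h0 ht, one_pow, mul_one]

theorem inv_pow_mul_pow_of_le {u : ℝ≥0∞} (h0 : u ≠ 0) (ht : u ≠ ∞) {p q : ℕ} (h : q ≤ p) :
    u⁻¹ ^ p * u ^ q = u⁻¹ ^ (p - q) := by
  conv_lhs => rw [← Nat.sub_add_cancel h, pow_add, mul_assoc, ← mul_pow,
    ENNReal.inv_mul_cancel h0 ht, one_pow, mul_one]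

theorem inv_le_two_mul_inv {r u : ℝ≥0∞} (h : r ≤ 2 * u) : u⁻¹ ≤ 2 * r⁻¹ :=
  calc u⁻¹ = 2 * (2 * u)⁻¹ := by
        rw [ENNReal.mul_inv (by simp) (by simp), ← mul_assoc,
          ENNReal.mul_inv_cancel (by simp) (by simp), one_mul]
    _ ≤ 2 * r⁻¹ := by gcongr

theorem tsum_ite_lt_inv_sq_le (R : ℕ) :
    ∑' m : ℕ, (if R < m then ((m : ℝ≥0∞) ^ 2)⁻¹ else 0) ≤ 2 * (R : ℝ≥0∞)⁻¹ := by
  refine ENNReal.tsum_le_of_sum_range_le fun n => ?_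
  rw [← sum_filter, show {m ∈ range n | R < m} = Ioo R n by ext; simp; omega]
  calc ∑ m ∈ Ioo R n, ((m : ℝ≥0∞) ^ 2)⁻¹ = ENNReal.ofReal (∑ m ∈ Ioo R n, ((m : ℝ) ^ 2)⁻¹) := by
        rw [ENNReal.ofReal_sum_of_nonneg fun _ _ => by positivity]
        refine sum_congr rfl fun m hm => ?_
        have : (0 : ℝ) < m := Nat.cast_pos.mpr (by have := (mem_Ioo.mp hm).1; omega)
        rw [ENNReal.ofReal_inv_of_pos (by positivity), ENNReal.ofReal_pow this.le,
          ENNReal.ofReal_natCast]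
    _ ≤ ENNReal.ofReal (2 / (R + 1)) := ENNReal.ofReal_le_ofReal (sum_Ioo_inv_sq_le R n)
    _ ≤ 2 * (R : ℝ≥0∞)⁻¹ := by
        rw [ENNReal.ofReal_div_of_pos (by positivity), div_eq_mul_inv]
        gcongr
        · simp
        · exact_mod_cast (Nat.le_succ R)

end ENNReal

section ChainSum

variable {α : Type*} (K : α → α → ℝ≥0∞)

noncomputable def chainSum (n : ℕ) (x y : α) : ℝ≥0∞ :=
  ∑' w : {w : Fin (n + 1) → α // w 0 = x ∧ w (Fin.last n) = y},
    ∏ i : Fin n, K (w.1 i.castSucc) (w.1 i.succ)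

theorem chainSum_one (x y : α) : chainSum K 1 x y = K x y := by
  let w₀ : {w : Fin 2 → α // w 0 = x ∧ w (Fin.last 1) = y} := ⟨![x, y], rfl, rfl⟩
  have hw₀ (w : {w : Fin 2 → α // w 0 = x ∧ w (Fin.last 1) = y}) : w = w₀ := by
    obtain ⟨w, h0, h1⟩ := w
    ext i
    fin_cases i
    · exact h0
    · exact h1
  rw [chainSum, tsum_eq_single w₀ fun w hw => (hw (hw₀ w)).elim]
  simp [w₀]

theorem chainSum_succ_le (n : ℕ) (x y : α) :
    chainSum K (n + 1) x y ≤ ∑' z, K x z * chainSum K n z y := by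
  let tail (w : {w : Fin (n + 2) → α // w 0 = x ∧ w (Fin.last (n + 1)) = y}) :
      Σ z, {w : Fin (n + 1) → α // w 0 = z ∧ w (Fin.last n) = y} :=
    -- `(0 : Fin (n + 1)).succ` rather than `1`, so that `Fin.tail w.1 0` matches it by `rfl`
    ⟨w.1 (0 : Fin (n + 1)).succ, Fin.tail w.1, rfl, w.2.2⟩
  have htail : Function.Injective tail := by
    intro w w' h
    have h' : Fin.tail w.1 = Fin.tail w'.1 := congrArg (fun p => p.2.1) h
    ext1
    rw [← Fin.cons_self_tail w.1, ← Fin.cons_self_tail w'.1, h', w.2.1, w'.2.1]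
  simp_rw [chainSum, ← ENNReal.tsum_mul_left]
  rw [← ENNReal.tsum_sigma' fun p : Σ z, {w : Fin (n + 1) → α // w 0 = z ∧ w (Fin.last n) = y} =>
    K x p.1 * ∏ i : Fin n, K (p.2.1 i.castSucc) (p.2.1 i.succ)]
  refine le_of_eq_of_le (tsum_congr fun w => ?_) (ENNReal.tsum_comp_le_tsum_of_injective htail _)
  simp only [tail, Fin.prod_univ_succ, Fin.castSucc_zero, w.2.1, Fin.tail, Fin.castSucc_succ]

end ChainSum

namespace LatticePath

variable {d : ℕ}

def supNorm (z : Fin d → ℤ) : ℕ := univ.sup fun i => (z i).natAbs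

theorem supNorm_le_iff {z : Fin d → ℤ} {m : ℕ} : supNorm z ≤ m ↔ ∀ i, (z i).natAbs ≤ m := by
  simp [supNorm]

theorem natAbs_le_supNorm (z : Fin d → ℤ) (i : Fin d) : (z i).natAbs ≤ supNorm z :=
  supNorm_le_iff.mp le_rfl i

theorem supNorm_add_le (x y : Fin d → ℤ) : supNorm (x + y) ≤ supNorm x + supNorm y :=
  supNorm_le_iff.mpr fun i => (Int.natAbs_add_le _ _).trans <|
    add_le_add (natAbs_le_supNorm x i) (natAbs_le_supNorm y i)

@[simp]
theorem supNorm_zero : supNorm (0 : Fin d → ℤ) = 0 := by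
  simp [supNorm]

@[simp]
theorem supNorm_eq_zero {z : Fin d → ℤ} : supNorm z = 0 ↔ z = 0 := by
  rw [← Nat.le_zero, supNorm_le_iff, funext_iff]
  simp

def bracket (z : Fin d → ℤ) : ℕ := max 1 (supNorm z)

theorem one_le_bracket (z : Fin d → ℤ) : 1 ≤ bracket z := le_max_left _ _

theorem bracket_add_le (x y : Fin d → ℤ) : bracket (x + y) ≤ bracket x + bracket y := by
  have := supNorm_add_le x y
  simp only [bracket]
  omega

theorem supNorm_pos {z : Fin d → ℤ} (hz : z ≠ 0) : 0 < supNorm z :=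
  Nat.pos_of_ne_zero (supNorm_eq_zero.not.mpr hz)

theorem bracket_eq_supNorm {z : Fin d → ℤ} (hz : z ≠ 0) : bracket z = supNorm z :=
  max_eq_right (supNorm_pos hz)

noncomputable def box (d m : ℕ) : Finset (Fin d → ℤ) :=
  Fintype.piFinset fun _ => Icc (-(m : ℤ)) m

theorem mem_box {m : ℕ} {z : Fin d → ℤ} : z ∈ box d m ↔ supNorm z ≤ m := by
  simp only [box, Fintype.mem_piFinset, mem_Icc, supNorm_le_iff, ← abs_le, Int.abs_eq_natAbs]
  exact_mod_cast Iff.rfl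

theorem card_box (m : ℕ) : #(box d m) = (2 * m + 1) ^ d := by
  simp only [box, Fintype.card_piFinset, Int.card_Icc, prod_const, card_univ, Fintype.card_fin]
  congr 1
  omega

theorem card_filter_supNorm_eq_le (hd : 0 < d) (m : ℕ) :
    #{z ∈ box d m | supNorm z = m} ≤ 2 * d * 3 ^ (d - 1) * max 1 m ^ (d - 1) := by
  rcases m with _ | k
  · calc #{z ∈ box d 0 | supNorm z = 0} ≤ #(box d 0) := card_filter_le _ _
      _ = 1 := by rw [card_box]; simp
      _ ≤ 2 * d * 3 ^ (d - 1) * max 1 0 ^ (d - 1) := Nat.one_le_iff_ne_zero.mpr (by simp; omega)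
  · have hsub : {z ∈ box d (k + 1) | supNorm z = k + 1} ⊆ box d (k + 1) \ box d k := by
      intro z
      simp only [mem_filter, mem_sdiff, mem_box]
      omega
    have hbox : box d k ⊆ box d (k + 1) := by
      intro z
      simp only [mem_box]
      omega
    refine (card_le_card hsub).trans ?_
    rw [card_sdiff_of_subset hbox, card_box, card_box, max_eq_right (by omega : 1 ≤ k + 1)]
    calc _ ≤ (2 * (k + 1) + 1 - (2 * k + 1)) * d * (2 * (k + 1) + 1) ^ (d - 1) :=
          Nat.pow_sub_pow_le_of_le (by omega) d
      _ ≤ 2 * d * (3 * (k + 1)) ^ (d - 1) := by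
        rw [show 2 * (k + 1) + 1 - (2 * k + 1) = 2 by omega]
        gcongr
        omega
      _ = _ := by rw [mul_pow]; ring

theorem tsum_comp_supNorm_le (hd : 0 < d) (g : ℕ → ℝ≥0∞) :
    ∑' z : Fin d → ℤ, g (supNorm z) ≤
      ∑' m : ℕ, ((2 * d * 3 ^ (d - 1) * max 1 m ^ (d - 1) : ℕ) : ℝ≥0∞) * g m := by
  have hfiber (m : ℕ) : ∑' z : Fin d → ℤ, (if supNorm z = m then g m else 0) =
      #{z ∈ box d m | supNorm z = m} * g m := by
    rw [tsum_eq_sum (s := {z ∈ box d m | supNorm z = m}) fun z hz => if_neg fun h =>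
        hz (mem_filter.mpr ⟨mem_box.mpr h.le, h⟩),
      sum_congr rfl fun z hz => if_pos (mem_filter.mp hz).2, sum_const, nsmul_eq_mul]
  calc ∑' z : Fin d → ℤ, g (supNorm z)
      = ∑' z : Fin d → ℤ, ∑' m : ℕ, (if supNorm z = m then g m else 0) := by
        simp_rw [eq_comm (a := supNorm _), tsum_ite_eq]
    _ = ∑' m : ℕ, (#{z ∈ box d m | supNorm z = m} : ℝ≥0∞) * g m := by
        rw [ENNReal.tsum_comm]
        simp_rw [hfiber]
    _ ≤ _ := ENNReal.tsum_le_tsum fun m => by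
        gcongr
        exact_mod_cast card_filter_supNorm_eq_le hd m

noncomputable def decay (a : ℕ) (z : Fin d → ℤ) : ℝ≥0∞ := (bracket z : ℝ≥0∞)⁻¹ ^ a

theorem decay_anti {a : ℕ} {y z : Fin d → ℤ} (h : bracket y ≤ bracket z) :
    decay a z ≤ decay a y := by
  unfold decay
  gcongr

theorem decay_le_of_le_two_mul {a R : ℕ} {z : Fin d → ℤ} (h : R ≤ 2 * bracket z) :
    decay a z ≤ 2 ^ a * (R : ℝ≥0∞)⁻¹ ^ a := by
  rw [decay, ← mul_pow]
  gcongr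
  exact ENNReal.inv_le_two_mul_inv (by exact_mod_cast h)

theorem exists_tsum_bracket_le_decay_le {b : ℕ} (hb : b < d) :
    ∃ C : ℕ, ∀ R : ℕ, 1 ≤ R →
      ∑' z : Fin d → ℤ, (if bracket z ≤ R then decay b z else 0) ≤ C * (R : ℝ≥0∞) ^ (d - b) := by
  set K := 2 * d * 3 ^ (d - 1)
  refine ⟨2 * K, fun R hR => ?_⟩
  have hterm (m : ℕ) : ((K * max 1 m ^ (d - 1) : ℕ) : ℝ≥0∞) *
      (if max 1 m ≤ R then ((max 1 m : ℕ) : ℝ≥0∞)⁻¹ ^ b else 0) ≤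
      if m ≤ R then K * (R : ℝ≥0∞) ^ (d - 1 - b) else 0 := by
    split_ifs with h1 h2 h2
    · rw [Nat.cast_mul, mul_assoc, Nat.cast_pow,
        ENNReal.pow_mul_inv_pow_of_le (by simp) (by simp) (by omega)]
      gcongr
    · omega
    all_goals simp
  calc _ ≤ _ := tsum_comp_supNorm_le (by omega) fun m =>
        if max 1 m ≤ R then ((max 1 m : ℕ) : ℝ≥0∞)⁻¹ ^ b else 0
    _ ≤ ∑' m : ℕ, if m ≤ R then K * (R : ℝ≥0∞) ^ (d - 1 - b) else 0 := ENNReal.tsum_le_tsum hterm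
    _ = (R + 1 : ℕ) * (K * (R : ℝ≥0∞) ^ (d - 1 - b)) := by
        rw [tsum_eq_sum (s := range (R + 1)) fun m hm => if_neg (by simpa using hm),
          sum_ite_of_true fun m hm => Nat.lt_succ_iff.mp (mem_range.mp hm), sum_const, card_range,
          nsmul_eq_mul]
    _ ≤ (2 * R : ℕ) * (K * (R : ℝ≥0∞) ^ (d - 1 - b)) := by gcongr; omega
    _ = (2 * K : ℕ) * (R : ℝ≥0∞) ^ (d - b) := by
        rw [show d - b = d - 1 - b + 1 by omega, pow_succ]
        push_cast
        ring

theorem exists_tsum_lt_bracket_decay_le (hd : 0 < d) {s : ℕ} (hs : d < s) :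
    ∃ C : ℕ, ∀ R : ℕ, 1 ≤ R →
      ∑' z : Fin d → ℤ, (if R < bracket z then decay s z else 0) ≤
        C * (R : ℝ≥0∞)⁻¹ ^ (s - d) := by
  set K := 2 * d * 3 ^ (d - 1)
  refine ⟨2 * K, fun R hR => ?_⟩
  have hterm (m : ℕ) : ((K * max 1 m ^ (d - 1) : ℕ) : ℝ≥0∞) *
      (if R < max 1 m then ((max 1 m : ℕ) : ℝ≥0∞)⁻¹ ^ s else 0) ≤
      K * (R : ℝ≥0∞)⁻¹ ^ (s - d - 1) * (if R < m then ((m : ℝ≥0∞) ^ 2)⁻¹ else 0) := by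
    split_ifs with h1 h2 h2
    · rw [max_eq_right (by omega : 1 ≤ m), Nat.cast_mul, mul_assoc, Nat.cast_pow,
        mul_comm ((m : ℝ≥0∞) ^ _),
        ENNReal.inv_pow_mul_pow_of_le (by simp; omega) (by simp) (by omega),
        show s - (d - 1) = s - d - 1 + 2 by omega, pow_add, ENNReal.inv_pow, mul_assoc]
      gcongr
    all_goals first | omega | simp
  calc _ ≤ _ := tsum_comp_supNorm_le hd fun m =>
        if R < max 1 m then ((max 1 m : ℕ) : ℝ≥0∞)⁻¹ ^ s else 0
    _ ≤ ∑' m : ℕ, K * (R : ℝ≥0∞)⁻¹ ^ (s - d - 1) * (if R < m then ((m : ℝ≥0∞) ^ 2)⁻¹ else 0) :=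
        ENNReal.tsum_le_tsum hterm
    _ ≤ K * (R : ℝ≥0∞)⁻¹ ^ (s - d - 1) * (2 * (R : ℝ≥0∞)⁻¹) := by
        rw [ENNReal.tsum_mul_left]
        gcongr
        exact ENNReal.tsum_ite_lt_inv_sq_le R
    _ = (2 * K : ℕ) * (R : ℝ≥0∞)⁻¹ ^ (s - d) := by
        rw [show s - d = s - d - 1 + 1 by omega, pow_succ]
        push_cast
        ring

theorem exists_tsum_decay_mul_decay_near_zero_le {a b : ℕ} (hb : b < d) (hab : d < a + b) :
    ∃ C : ℕ, ∀ x : Fin d → ℤ,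
      ∑' y : Fin d → ℤ, (if bracket y ≤ bracket (x - y) then decay a (x - y) * decay b y else 0) ≤
        C * decay (a + b - d) x := by
  obtain ⟨C₁, hC₁⟩ := exists_tsum_bracket_le_decay_le hb
  obtain ⟨C₂, hC₂⟩ := exists_tsum_lt_bracket_decay_le (by omega) hab
  refine ⟨2 ^ a * C₁ + C₂, fun x => ?_⟩
  set R := bracket x
  have hR : 1 ≤ R := one_le_bracket x
  -- Where `y` is nearer to `0` than to `x` we have `⟨x - y⟩ ≥ ⟨x⟩ / 2`, and `⟨x - y⟩ ≥ ⟨y⟩`: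
  -- the first bound serves for `⟨y⟩ ≤ ⟨x⟩`, the second turns the tail `⟨y⟩ > ⟨x⟩` into a
  -- single convergent sum of `⟨y⟩^{-(a+b)}`.
  have hterm (y : Fin d → ℤ) :
      (if bracket y ≤ bracket (x - y) then decay a (x - y) * decay b y else 0) ≤
        2 ^ a * (R : ℝ≥0∞)⁻¹ ^ a * (if bracket y ≤ R then decay b y else 0) +
          (if R < bracket y then decay (a + b) y else 0) := by
    by_cases hnear : bracket y ≤ bracket (x - y)
    · rw [if_pos hnear]
      rcases le_or_gt (bracket y) R with hsmall | hlarge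
      · have hR2 : R ≤ 2 * bracket (x - y) := by
          have := bracket_add_le (x - y) y
          rw [sub_add_cancel] at this
          omega
        rw [if_pos hsmall]
        calc decay a (x - y) * decay b y ≤ 2 ^ a * (R : ℝ≥0∞)⁻¹ ^ a * decay b y := by
              gcongr
              exact decay_le_of_le_two_mul hR2
          _ ≤ _ := le_self_add
      · rw [if_pos hlarge]
        calc decay a (x - y) * decay b y ≤ decay a y * decay b y := by
              gcongr
              exact decay_anti hnear
          _ = decay (a + b) y := by rw [decay, decay, decay, pow_add]
          _ ≤ _ := le_add_self
    · rw [if_neg hnear]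
      exact zero_le
  have hpow : (R : ℝ≥0∞)⁻¹ ^ a * (R : ℝ≥0∞) ^ (d - b) = (R : ℝ≥0∞)⁻¹ ^ (a + b - d) := by
    rw [ENNReal.inv_pow_mul_pow_of_le (by simp; omega) (by simp) (by omega)]
    congr 1
    omega
  calc _ ≤ ∑' y : Fin d → ℤ, (2 ^ a * (R : ℝ≥0∞)⁻¹ ^ a * (if bracket y ≤ R then decay b y else 0) +
          (if R < bracket y then decay (a + b) y else 0)) := ENNReal.tsum_le_tsum hterm
    _ = 2 ^ a * (R : ℝ≥0∞)⁻¹ ^ a * ∑' y : Fin d → ℤ, (if bracket y ≤ R then decay b y else 0) +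
          ∑' y : Fin d → ℤ, (if R < bracket y then decay (a + b) y else 0) := by
        rw [ENNReal.tsum_add, ENNReal.tsum_mul_left]
    _ ≤ 2 ^ a * (R : ℝ≥0∞)⁻¹ ^ a * (C₁ * (R : ℝ≥0∞) ^ (d - b)) +
          C₂ * (R : ℝ≥0∞)⁻¹ ^ (a + b - d) := by
        gcongr
        · exact hC₁ R hR
        · exact hC₂ R hR
    _ = (2 ^ a * C₁ + C₂ : ℕ) * (R : ℝ≥0∞)⁻¹ ^ (a + b - d) := by
        rw [← hpow]
        push_cast
        ring

theorem exists_tsum_decay_mul_decay_le {a b : ℕ} (ha : a < d) (hb : b < d) (hab : d < a + b) :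
    ∃ C : ℕ, ∀ x : Fin d → ℤ,
      ∑' z : Fin d → ℤ, decay a z * decay b (x - z) ≤ C * decay (a + b - d) x := by
  obtain ⟨C₁, hC₁⟩ := exists_tsum_decay_mul_decay_near_zero_le (a := a) hb hab
  obtain ⟨C₂, hC₂⟩ := exists_tsum_decay_mul_decay_near_zero_le (a := b) ha (by omega)
  refine ⟨C₁ + C₂, fun x => ?_⟩
  have hsplit (z : Fin d → ℤ) : decay a z * decay b (x - z) ≤
      (if bracket (x - z) ≤ bracket (x - (x - z)) then decay a (x - (x - z)) * decay b (x - z)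
        else 0) +
      (if bracket z ≤ bracket (x - z) then decay b (x - z) * decay a z else 0) := by
    rw [sub_sub_cancel]
    rcases le_total (bracket (x - z)) (bracket z) with h | h
    · rw [if_pos h]
      exact le_self_add
    · rw [if_pos h, mul_comm]
      exact le_add_self
  calc _ ≤ _ := ENNReal.tsum_le_tsum hsplit
    _ = ∑' y : Fin d → ℤ,
          (if bracket y ≤ bracket (x - y) then decay a (x - y) * decay b y else 0) +
        ∑' z : Fin d → ℤ,
          (if bracket z ≤ bracket (x - z) then decay b (x - z) * decay a z else 0) := by
        rw [ENNReal.tsum_add]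
        congr 1
        exact (Equiv.subLeft x).tsum_eq
          fun y => if bracket y ≤ bracket (x - y) then decay a (x - y) * decay b y else 0
    _ ≤ C₁ * decay (a + b - d) x + C₂ * decay (b + a - d) x := add_le_add (hC₁ x) (hC₂ x)
    _ = (C₁ + C₂ : ℕ) * decay (a + b - d) x := by
        rw [add_comm b a]
        push_cast
        ring


theorem exists_chainSum_le {K : (Fin d → ℤ) → (Fin d → ℤ) → ℝ≥0∞}
    (hK : ∀ x y, K x y ≤ decay (d - 1) (x - y)) {n : ℕ} (hn : 1 ≤ n) (hnd : n < d) :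
    ∃ C : ℕ, ∀ x y, chainSum K n x y ≤ C * decay (d - n) (x - y) := by
  revert hnd
  induction n, hn using Nat.le_induction with
  | base => exact fun _ => ⟨1, fun x y => by rw [chainSum_one, Nat.cast_one, one_mul]; exact hK x y⟩
  | succ n hn ih =>
    intro hnd
    obtain ⟨C, hC⟩ := ih (by omega)
    obtain ⟨C', hC'⟩ := exists_tsum_decay_mul_decay_le (d := d) (a := d - 1) (b := d - n)
      (by omega) (by omega) (by omega)
    refine ⟨C * C', fun x y => ?_⟩
    calc chainSum K (n + 1) x y ≤ ∑' z, K x z * chainSum K n z y := chainSum_succ_le K n x y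
      _ ≤ ∑' z, decay (d - 1) (x - z) * (C * decay (d - n) (z - y)) :=
          ENNReal.tsum_le_tsum fun z => mul_le_mul' (hK x z) (hC z y)
      _ = C * ∑' u, decay (d - 1) u * decay (d - n) (x - y - u) := by
          rw [← ENNReal.tsum_mul_left, ← (Equiv.subLeft x).tsum_eq]
          refine tsum_congr fun u => ?_
          rw [Equiv.subLeft_apply, sub_sub_cancel, sub_right_comm]
          ring
      _ ≤ C * (C' * decay (d - 1 + (d - n) - d) (x - y)) := by gcongr; exact hC' (x - y)
      _ = (C * C' : ℕ) * decay (d - (n + 1)) (x - y) := by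
          rw [show d - 1 + (d - n) - d = d - (n + 1) by omega]
          push_cast
          ring

theorem latticeKernel_nonneg (z : Fin d → ℤ) : 0 ≤ latticeKernel z := by
  unfold latticeKernel
  split_ifs <;> positivity

theorem supNorm_le_norm_latticeEmbed (z : Fin d → ℤ) : (supNorm z : ℝ) ≤ ‖latticeEmbed z‖ := by
  refine Finset.sup_induction (p := fun m : ℕ => (m : ℝ) ≤ ‖latticeEmbed z‖) (by simp)
    (fun a ha b hb => by simpa using max_le ha hb) fun i _ => ?_
  simpa [latticeEmbed] using PiLp.norm_apply_le (latticeEmbed z) i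

theorem norm_latticeEmbed_le (z : Fin d → ℤ) : ‖latticeEmbed z‖ ≤ d * supNorm z := by
  rw [EuclideanSpace.norm_eq, Real.sqrt_le_left (by positivity)]
  calc ∑ i, ‖latticeEmbed z i‖ ^ 2 ≤ ∑ _i : Fin d, (supNorm z : ℝ) ^ 2 := by
        gcongr with i
        rw [latticeEmbed, PiLp.toLp_apply, Real.norm_eq_abs, ← Int.cast_abs, Int.abs_eq_natAbs]
        exact_mod_cast natAbs_le_supNorm z i
    _ = d * (supNorm z : ℝ) ^ 2 := by simp
    _ ≤ (d * supNorm z : ℝ) ^ 2 := by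
        rw [mul_pow]
        gcongr
        exact_mod_cast Nat.le_self_pow two_ne_zero d

theorem ofReal_latticeKernel_le (hd : 0 < d) (z : Fin d → ℤ) :
    ENNReal.ofReal (latticeKernel z) ≤ decay (d - 1) z := by
  by_cases hz : z = 0
  · simp [latticeKernel, hz, decay, bracket]
  have hnorm := supNorm_le_norm_latticeEmbed z
  have hpos : (0 : ℝ) < supNorm z := Nat.cast_pos.mpr (supNorm_pos hz)
  have hexp : -((d : ℝ) - 1) = -((d - 1 : ℕ) : ℝ) := by rw [Nat.cast_sub hd, Nat.cast_one]
  rw [latticeKernel, if_neg hz, decay, bracket_eq_supNorm hz]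
  calc ENNReal.ofReal (min 1 (‖latticeEmbed z‖ ^ (-((d : ℝ) - 1))))
      ≤ ENNReal.ofReal ((supNorm z : ℝ) ^ (-((d : ℝ) - 1))) :=
        ENNReal.ofReal_le_ofReal <| (min_le_right _ _).trans <|
          Real.rpow_le_rpow_of_nonpos hpos hnorm (by simp; omega)
    _ = _ := by
        rw [hexp, Real.rpow_neg hpos.le, Real.rpow_natCast,
          ENNReal.ofReal_inv_of_pos (by positivity), ENNReal.ofReal_pow hpos.le,
          ENNReal.ofReal_natCast, ENNReal.inv_pow]

theorem decay_le_ofReal {z : Fin d → ℤ} (hz : z ≠ 0) (k : ℕ) :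
    decay k z ≤ ENNReal.ofReal ((d / ‖latticeEmbed z‖) ^ k) := by
  have hpos : (0 : ℝ) < supNorm z := Nat.cast_pos.mpr (supNorm_pos hz)
  have hnorm : 0 < ‖latticeEmbed z‖ := hpos.trans_le (supNorm_le_norm_latticeEmbed z)
  rw [decay, bracket_eq_supNorm hz, ENNReal.ofReal_pow (by positivity)]
  gcongr
  rw [← ENNReal.ofReal_natCast, ← ENNReal.ofReal_inv_of_pos hpos]
  refine ENNReal.ofReal_le_ofReal ?_
  rw [inv_le_iff_one_le_mul₀ hpos, div_mul_eq_mul_div, le_div_iff₀ hnorm, one_mul]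
  exact norm_latticeEmbed_le z

end LatticePath

open LatticePath in
theorem stmt0_general (d n : ℕ) (hn : 1 ≤ n) (hnd : n ≤ d - 1) :
    ∃ c : ℝ, 0 < c ∧
      ∀ z₀ zN : Fin d → ℤ, z₀ ≠ zN →
        (∑' w : {w : Fin (n + 1) → Fin d → ℤ // w 0 = z₀ ∧ w (Fin.last n) = zN},
            ENNReal.ofReal (∏ i : Fin n, latticeKernel (w.1 i.castSucc - w.1 i.succ)))
          ≤ ENNReal.ofReal (c / ‖latticeEmbed (z₀ - zN)‖ ^ (d - n)) := by
  have hd : 0 < d := by omega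
  obtain ⟨C, hC⟩ := exists_chainSum_le (fun x y => ofReal_latticeKernel_le hd (x - y)) hn (by omega)
  refine ⟨C * d ^ (d - n) + 1, by positivity, fun z₀ zN hne => ?_⟩
  calc _ = chainSum (fun x y => ENNReal.ofReal (latticeKernel (x - y))) n z₀ zN := by
        simp_rw [ENNReal.ofReal_prod_of_nonneg fun _ _ => latticeKernel_nonneg _]
        rfl
    _ ≤ C * decay (d - n) (z₀ - zN) := hC z₀ zN
    _ ≤ C * ENNReal.ofReal ((d / ‖latticeEmbed (z₀ - zN)‖) ^ (d - n)) := by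
        gcongr
        exact decay_le_ofReal (sub_ne_zero.mpr hne) _
    _ ≤ _ := by
        rw [← ENNReal.ofReal_natCast, ← ENNReal.ofReal_mul (by positivity), div_pow,
          mul_div_assoc']
        gcongr
        linarith

theorem stmt0 (d n : ℕ) (hd : 3 ≤ d) (hn : 1 ≤ n) (hnd : n ≤ d - 1) :
    ∃ c : ℝ, 0 < c ∧
      ∀ z₀ zN : Fin d → ℤ, z₀ ≠ zN →
        (∑' w : {w : Fin (n + 1) → Fin d → ℤ // w 0 = z₀ ∧ w (Fin.last n) = zN},
            ENNReal.ofReal (∏ i : Fin n, latticeKernel (w.1 i.castSucc - w.1 i.succ)))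
          ≤ ENNReal.ofReal (c / ‖latticeEmbed (z₀ - zN)‖ ^ (d - n)) :=
  stmt0_general d n hn hnd
end

section
/- Let d ≥ 3 and r ≥ 10. Let x = (r, 0, …, 0) ∈ ℝ^d and for each integer i with 2 ≤ i ≤ ⌊r⌋ let D_i = B((0, i, 0, …, 0), 1/8) be the closed ball of radius 1/8 centered at (0, i, 0, …, 0). Then for all integers i ≠ j in {2, …, ⌊r⌋}, no line in ℝ^d intersects all three of the sets B(x,1), D_i and D_j. In other words, the sets of lines meeting both B(x,1) and D_i, for i = 2, …, ⌊r⌋, are pairwise disjoint. -/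
/-- A line in `ℝ^d`: a set of the form `{a + t • v : t ∈ ℝ}` with `v ≠ 0`. -/
def IsLine {d : ℕ} (L : Set (EuclideanSpace ℝ (Fin d))) : Prop :=
  ∃ a v : EuclideanSpace ℝ (Fin d), v ≠ 0 ∧ L = {x | ∃ t : ℝ, x = a + t • v}

lemma EuclideanSpace.abs_apply_sub_apply_le_of_mem_closedBall {ι : Type*} [Fintype ι]
    {x c : EuclideanSpace ℝ ι} {ρ : ℝ} (hx : x ∈ Metric.closedBall c ρ) (k : ι) :
    |x k - c k| ≤ ρ :=
  (PiLp.dist_apply_le x c k).trans hx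

lemma IsLine.sub_mul_sub_eq {d : ℕ} {L : Set (EuclideanSpace ℝ (Fin d))} (hL : IsLine L)
    {A P Q : EuclideanSpace ℝ (Fin d)} (hA : A ∈ L) (hP : P ∈ L) (hQ : Q ∈ L) (k l : Fin d) :
    (P k - A k) * (Q l - A l) = (Q k - A k) * (P l - A l) := by
  obtain ⟨a, v, -, rfl⟩ := hL
  obtain ⟨tA, rfl⟩ := hA
  obtain ⟨tP, rfl⟩ := hP
  obtain ⟨tQ, rfl⟩ := hQ
  simp only [PiLp.add_apply, PiLp.smul_apply, smul_eq_mul]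
  ring

/-- The planar picture: a point near `(r, 0)` and points near `(0, i)` and `(0, j)` with
`j + 1 ≤ i ≤ r` are never collinear. -/
lemma not_collinear_of_near_axes {a₀ a₁ p₀ p₁ q₀ q₁ i j r : ℝ} (hr : 3 ≤ r)
    (ha₀ : |a₀ - r| ≤ 1) (ha₁ : |a₁| ≤ 1) (hp₀ : |p₀| ≤ 1 / 8) (hp₁ : |p₁ - i| ≤ 1 / 8)
    (hq₀ : |q₀| ≤ 1 / 8) (hq₁ : |q₁ - j| ≤ 1 / 8) (hj : 0 ≤ j) (hji : j + 1 ≤ i) (hi : i ≤ r) :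
    (p₀ - a₀) * (q₁ - a₁) ≠ (q₀ - a₀) * (p₁ - a₁) := by
  intro h
  -- `a₀ (p₁ - q₁) ≥ 3 (r - 1) / 4` outweighs the other terms, which total at most `(r + 9/8) / 4`
  have hdet : a₀ * (p₁ - q₁) = a₁ * (p₀ - q₀) + p₁ * q₀ - p₀ * q₁ := by linear_combination h
  rw [abs_le] at ha₀ ha₁ hp₀ hp₁ hq₀ hq₁
  have h₁ : (r - 1) * (3 / 4) ≤ a₀ * (p₁ - q₁) :=
    mul_le_mul (by linarith) (by linarith) (by norm_num) (by linarith)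
  have h₂ : |a₁ * (p₀ - q₀)| ≤ 1 * (1 / 4) := by
    rw [abs_mul]
    exact mul_le_mul (abs_le.mpr ha₁) (abs_le.mpr ⟨by linarith, by linarith⟩) (abs_nonneg _)
      (by norm_num)
  have h₃ : |p₁ * q₀| ≤ (r + 1 / 8) * (1 / 8) := by
    rw [abs_mul]
    exact mul_le_mul (abs_le.mpr ⟨by linarith, by linarith⟩) (abs_le.mpr hq₀) (abs_nonneg _)
      (by linarith)
  have h₄ : |p₀ * q₁| ≤ (1 / 8) * (r + 1 / 8) := by
    rw [abs_mul]
    exact mul_le_mul (abs_le.mpr hp₀) (abs_le.mpr ⟨by linarith, by linarith⟩) (abs_nonneg _)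
      (by norm_num)
  linarith [le_abs_self (a₁ * (p₀ - q₀)), le_abs_self (p₁ * q₀), neg_abs_le (p₀ * q₁)]

theorem stmt8 (d : ℕ) (hd : 3 ≤ d) (r : ℝ) (hr : 10 ≤ r)
    (i j : ℤ) (hi2 : 2 ≤ i) (hir : i ≤ ⌊r⌋) (hj2 : 2 ≤ j) (hjr : j ≤ ⌊r⌋) (hij : i ≠ j)
    (L : Set (EuclideanSpace ℝ (Fin d))) (hL : IsLine L) :
    ¬ ((L ∩ Metric.closedBall (EuclideanSpace.single (⟨0, by omega⟩ : Fin d) r) 1).Nonempty ∧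
       (L ∩ Metric.closedBall
          (EuclideanSpace.single (⟨1, by omega⟩ : Fin d) (i : ℝ)) (1 / 8)).Nonempty ∧
       (L ∩ Metric.closedBall
          (EuclideanSpace.single (⟨1, by omega⟩ : Fin d) (j : ℝ)) (1 / 8)).Nonempty) := by
  rintro ⟨⟨A, hAL, hA⟩, ⟨P, hPL, hP⟩, ⟨Q, hQL, hQ⟩⟩
  set e₀ : Fin d := ⟨0, by omega⟩
  set e₁ : Fin d := ⟨1, by omega⟩
  have he : e₁ ≠ e₀ := by simp [e₀, e₁, Fin.ext_iff]
  have coord {x : EuclideanSpace ℝ (Fin d)} {k : Fin d} {c ρ : ℝ}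
      (hx : x ∈ Metric.closedBall (EuclideanSpace.single k c) ρ) (l : Fin d) :
      |x l - if l = k then c else 0| ≤ ρ := by
    simpa [PiLp.single_apply] using
      EuclideanSpace.abs_apply_sub_apply_le_of_mem_closedBall hx l
  have hA₀ := coord hA e₀
  have hA₁ := coord hA e₁
  have hP₀ := coord hP e₀
  have hP₁ := coord hP e₁
  have hQ₀ := coord hQ e₀
  have hQ₁ := coord hQ e₁
  simp only [he, he.symm, if_true, if_false, sub_zero] at hA₀ hA₁ hP₀ hP₁ hQ₀ hQ₁
  have hcol := hL.sub_mul_sub_eq hAL hPL hQL e₀ e₁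
  have hir' : (i : ℝ) ≤ r := Int.le_floor.mp hir
  have hjr' : (j : ℝ) ≤ r := Int.le_floor.mp hjr
  rcases hij.lt_or_gt with h | h
  · have hij' : (i : ℝ) + 1 ≤ j := by exact_mod_cast h
    exact not_collinear_of_near_axes (by linarith) hA₀ hA₁ hQ₀ hQ₁ hP₀ hP₁
      (by exact_mod_cast (by omega : (0 : ℤ) ≤ i)) hij' hjr' hcol.symm
  · have hji' : (j : ℝ) + 1 ≤ i := by exact_mod_cast h
    exact not_collinear_of_near_axes (by linarith) hA₀ hA₁ hP₀ hP₁ hQ₀ hQ₁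
      (by exact_mod_cast (by omega : (0 : ℤ) ≤ j)) hji' hir' hcol
end
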